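/- arXiv:1905.09078 — 6 statements merged into one kernel-verified Lean document; each statement's English description precedes it below -/
import Mathlib

section
/- Let Q be a positive definite symmetric n×n real matrix with det Q = 1 and tr Q ≤ R + n for some R > 0, and set q = tr Q − n ≥ 0. Then every eigenvalue λ of Q satisfies |λ − 1| ≤ (2(n−1)/n)^{1/2} · (R+n)^{1 + 1/(2(n−1))} · q^{1/2}. -/
/-!
Let `μ = λᵢ` be an eigenvalue of `Q`. Since `∏ λⱼ = 1`, AM–GM applied to the other `n - 1`
eigenvalues gives `μ + (n - 1) μ ^ (-1 / (n - 1)) ≤ tr Q = q + n`. With `α = 1 / (n - 1)`, the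
function `f t = t + t ^ (-α) / α` has `f 1 = n`, `f' 1 = 0` and `f'' t = (α + 1) t ^ (-α - 2)`,
which is at least `(α + 1) K ^ (-α - 2)` on `(0, K]`, where `K = R + n ≥ tr Q ≥ μ`. Taylor's
formula at `1` then gives `q ≥ f μ - f 1 ≥ (α + 1) / 2 * K ^ (-α - 2) * (μ - 1) ^ 2`, which is the
claimed bound.
-/

open Real Set Finset Matrix

theorem isMinOn_of_hasDerivAt_nonpos_of_nonneg {f f' : ℝ → ℝ} {a b c : ℝ}
    (hf : ∀ x ∈ Icc a c, HasDerivAt f (f' x) x) (hab : a ≤ b) (hbc : b ≤ c)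
    (hleft : ∀ x ∈ Ioo a b, f' x ≤ 0) (hright : ∀ x ∈ Ioo b c, 0 ≤ f' x) :
    IsMinOn f (Icc a c) b := by
  have hcont : ContinuousOn f (Icc a c) := fun x hx => (hf x hx).continuousAt.continuousWithinAt
  rw [isMinOn_iff]
  intro t ht
  rcases le_total t b with htb | hbt
  · refine antitoneOn_of_hasDerivWithinAt_nonpos (f' := f') (convex_Icc a b)
      (hcont.mono (Icc_subset_Icc_right hbc)) (fun x hx => ?_) (fun x hx => ?_)
      ⟨ht.1, htb⟩ (right_mem_Icc.2 hab) htb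
    · rw [interior_Icc] at hx ⊢
      exact (hf x (Ioo_subset_Icc_self.trans (Icc_subset_Icc_right hbc) hx)).hasDerivWithinAt
    · exact hleft x (by rwa [interior_Icc] at hx)
  · refine monotoneOn_of_hasDerivWithinAt_nonneg (f' := f') (convex_Icc b c)
      (hcont.mono (Icc_subset_Icc_left hab)) (fun x hx => ?_) (fun x hx => ?_)
      (left_mem_Icc.2 hbc) ⟨hbt, ht.2⟩ hbt
    · rw [interior_Icc] at hx ⊢
      exact (hf x (Ioo_subset_Icc_self.trans (Icc_subset_Icc_left hab) hx)).hasDerivWithinAt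
    · exact hright x (by rwa [interior_Icc] at hx)

theorem mul_sub_one_le_one_sub_rpow_neg {β K t : ℝ} (hβ : 1 ≤ β) (ht : 1 ≤ t) (htK : t ≤ K) :
    β * K ^ (-(β + 1)) * (t - 1) ≤ 1 - t ^ (-β) := by
  have ht0 : 0 < t := by linarith
  have hK : 1 ≤ K := ht.trans htK
  have hbern : 1 + β * (t - 1) ≤ t ^ β := by
    simpa using one_add_mul_self_le_rpow_one_add (s := t - 1) (by linarith) hβ
  have hβt : 0 ≤ β * (t - 1) := mul_nonneg (by linarith) (by linarith)
  calc β * K ^ (-(β + 1)) * (t - 1) = K ^ (-(β + 1)) * (β * (t - 1)) := by ring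
    _ ≤ t ^ (-β) * (β * (t - 1)) := by
        gcongr
        calc K ^ (-(β + 1)) ≤ K ^ (-β) := rpow_le_rpow_of_exponent_le hK (by linarith)
          _ ≤ t ^ (-β) := rpow_le_rpow_of_nonpos ht0 htK (by linarith)
    _ ≤ t ^ (-β) * (t ^ β - 1) := by gcongr; linarith
    _ = 1 - t ^ (-β) := by rw [mul_sub, rpow_neg ht0.le, inv_mul_cancel₀ (by positivity)]; ring

theorem one_sub_rpow_neg_le_mul_sub_one {β K t : ℝ} (hβ : 1 ≤ β) (hK : 1 ≤ K) (ht : 0 < t)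
    (ht1 : t ≤ 1) : 1 - t ^ (-β) ≤ β * K ^ (-(β + 1)) * (t - 1) := by
  have hbern : 1 + β * (t⁻¹ - 1) ≤ t⁻¹ ^ β := by
    simpa using one_add_mul_self_le_rpow_one_add (s := t⁻¹ - 1) (by linarith [inv_pos.2 ht]) hβ
  have hinv : 1 - t ≤ t⁻¹ - 1 := by
    have h : t⁻¹ - 1 - (1 - t) = (1 - t) ^ 2 / t := by field_simp
    have : 0 ≤ (1 - t) ^ 2 / t := by positivity
    linarith
  have hKβ : K ^ (-(β + 1)) ≤ 1 := rpow_le_one_of_one_le_of_nonpos hK (by linarith)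
  calc 1 - t ^ (-β) ≤ β * (t - 1) := by
        rw [rpow_neg ht.le, ← inv_rpow ht.le]; nlinarith
    _ ≤ β * K ^ (-(β + 1)) * (t - 1) :=
        mul_le_mul_of_nonpos_right (mul_le_of_le_one_right (by linarith) hKβ) (by linarith)

theorem mul_sq_sub_one_le_add_inv_mul_rpow_neg {α K t : ℝ} (hα : 0 < α) (hK : 1 ≤ K)
    (ht : 0 < t) (htK : t ≤ K) :
    (α + 1) / 2 * K ^ (-(α + 2)) * (t - 1) ^ 2 ≤ t + α⁻¹ * t ^ (-α) - (α⁻¹ + 1) := by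
  set c := (α + 1) / 2 * K ^ (-(α + 2)) with hc
  have h2c : (α + 1) * K ^ (-(α + 1 + 1)) = 2 * c := by
    rw [hc, show -(α + 1 + 1) = -(α + 2) by ring]; ring
  let g : ℝ → ℝ := fun x => x + α⁻¹ * x ^ (-α) - (α⁻¹ + 1) - c * (x - 1) ^ 2
  have hg : ∀ x ∈ Icc (min t 1) K, HasDerivAt g (1 - x ^ (-(α + 1)) - 2 * c * (x - 1)) x := by
    intro x hx
    have hx0 : 0 < x := lt_of_lt_of_le (lt_min ht one_pos) hx.1
    refine (((hasDerivAt_id x).add ((hasDerivAt_rpow_const (p := -α) (Or.inl hx0.ne')).const_mul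
      α⁻¹)).sub_const (α⁻¹ + 1)).sub (((hasDerivAt_id x).sub_const 1).pow 2 |>.const_mul c)
      |>.congr_deriv ?_
    rw [id_eq, show -α - 1 = -(α + 1) by ring]
    field_simp
    ring
  have hmin : g 1 ≤ g t :=
    isMinOn_of_hasDerivAt_nonpos_of_nonneg hg (min_le_right t 1) hK
      (fun x hx => by
        have := one_sub_rpow_neg_le_mul_sub_one (β := α + 1) (by linarith) hK
          ((lt_min ht one_pos).trans hx.1) hx.2.le
        rw [h2c] at this
        linarith)
      (fun x hx => by
        have := mul_sub_one_le_one_sub_rpow_neg (β := α + 1) (by linarith) hx.1.le hx.2.le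
        rw [h2c] at this
        linarith)
      ⟨min_le_left t 1, htK⟩
  simp only [g, one_rpow] at hmin
  linarith

theorem add_mul_rpow_neg_le_sum {ι : Type*} [Fintype ι] {x : ι → ℝ} (hx : ∀ j, 0 < x j)
    (hprod : ∏ j, x j = 1) (hcard : 1 < Fintype.card ι) (i : ι) :
    x i + ((Fintype.card ι : ℝ) - 1) * x i ^ (-((Fintype.card ι : ℝ) - 1)⁻¹) ≤ ∑ j, x j := by
  classical
  set m : ℝ := (Fintype.card ι : ℝ) - 1
  have hm : 0 < m := by simp only [m, sub_pos]; exact_mod_cast hcard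
  have hcard' : ∑ _j ∈ univ.erase i, (1 : ℝ) = m := by
    simp [card_erase_of_mem (mem_univ i), Nat.cast_sub hcard.le, m]
  have hrest : ∏ j ∈ univ.erase i, x j = (x i)⁻¹ :=
    eq_inv_of_mul_eq_one_right (by rw [mul_prod_erase _ _ (mem_univ i), hprod])
  have hamgm := geom_mean_le_arith_mean (univ.erase i) (fun _ => 1) x (fun _ _ => zero_le_one)
    (hcard'.symm ▸ hm) (fun j _ => (hx j).le)
  simp only [rpow_one, one_mul, hcard', hrest] at hamgm
  rw [inv_rpow (hx i).le, ← rpow_neg (hx i).le, le_div_iff₀ hm] at hamgm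
  have hsum := add_sum_erase univ x (mem_univ i)
  linarith

theorem abs_sub_one_le_of_add_mul_rpow_neg_le {N K t s : ℝ} (hN : 1 < N) (hK : 1 ≤ K)
    (ht : 0 < t) (htK : t ≤ K) (h : t + (N - 1) * t ^ (-(N - 1)⁻¹) ≤ s) :
    |t - 1| ≤ √(2 * (N - 1) / N) * K ^ (1 + 1 / (2 * (N - 1))) * √(s - N) := by
  have hN1 : 0 < N - 1 := sub_pos.2 hN
  have hK0 : 0 < K := by linarith
  have htaylor := mul_sq_sub_one_le_add_inv_mul_rpow_neg (inv_pos.2 hN1) hK ht htK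
  rw [inv_inv] at htaylor
  set B := √(2 * (N - 1) / N) * K ^ (1 + 1 / (2 * (N - 1)))
  have hB : B ^ 2 * (((N - 1)⁻¹ + 1) / 2 * K ^ (-((N - 1)⁻¹ + 2))) = 1 := by
    rw [mul_pow, sq_sqrt (by positivity), ← rpow_natCast, ← rpow_mul hK0.le, rpow_neg hK0.le]
    rw [show (1 + 1 / (2 * (N - 1))) * ((2 : ℕ) : ℝ) = (N - 1)⁻¹ + 2 by push_cast; field_simp; ring]
    field_simp
    ring
  have hsq : (t - 1) ^ 2 ≤ B ^ 2 * (s - N) := by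
    calc (t - 1) ^ 2 = B ^ 2 * (((N - 1)⁻¹ + 1) / 2 * K ^ (-((N - 1)⁻¹ + 2)) * (t - 1) ^ 2) := by
          rw [← mul_assoc, hB, one_mul]
      _ ≤ B ^ 2 * (s - N) := by gcongr; linarith
  calc |t - 1| ≤ √(B ^ 2 * (s - N)) := abs_le_sqrt hsq
    _ = B * √(s - N) := by rw [sqrt_mul (sq_nonneg B), sqrt_sq (by positivity)]

theorem Matrix.IsHermitian.exists_eigenvalues_eq {𝕜 n : Type*} [RCLike 𝕜] [Fintype n]
    [DecidableEq n] {A : Matrix n n 𝕜} (hA : A.IsHermitian) {μ : ℝ} {v : n → 𝕜} (hv : v ≠ 0)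
    (hAv : A *ᵥ v = μ • v) : ∃ i, hA.eigenvalues i = μ := by
  have heig : Module.End.HasEigenvalue (Matrix.toLin' A) (μ : 𝕜) :=
    Module.End.hasEigenvalue_of_hasEigenvector
      ⟨Module.End.mem_eigenspace_iff.2 (by simpa [RCLike.real_smul_eq_coe_smul] using hAv), hv⟩
  have hμ : μ ∈ spectrum ℝ A := by
    rw [← spectrum.algebraMap_mem_iff 𝕜, ← Matrix.spectrum_toLin']
    exact heig.mem_spectrum
  rwa [hA.spectrum_real_eq_range_eigenvalues] at hμ

theorem abs_sub_one_le_of_prod_eq_one {ι : Type*} [Fintype ι] {x : ι → ℝ} (hx : ∀ j, 0 < x j)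
    (hprod : ∏ j, x j = 1) {R : ℝ} (hR : 0 ≤ R) (hsum : ∑ j, x j ≤ R + Fintype.card ι) (i : ι) :
    |x i - 1| ≤ √(2 * ((Fintype.card ι : ℝ) - 1) / Fintype.card ι) *
      (R + Fintype.card ι) ^ (1 + 1 / (2 * ((Fintype.card ι : ℝ) - 1))) *
      √(∑ j, x j - Fintype.card ι) := by
  rcases le_or_gt (Fintype.card ι) 1 with hcard | hcard
  · have := Fintype.card_le_one_iff_subsingleton.1 hcard
    have hxi : x i = 1 := by rwa [Fintype.prod_subsingleton _ i] at hprod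
    rw [hxi, sub_self, abs_zero]
    positivity
  · have hN : (1 : ℝ) < Fintype.card ι := by exact_mod_cast hcard
    have hxi_le : x i ≤ ∑ j, x j := single_le_sum (fun j _ => (hx j).le) (mem_univ i)
    exact abs_sub_one_le_of_add_mul_rpow_neg_le hN (by linarith) (hx i) (by linarith)
      (add_mul_rpow_neg_le_sum hx hprod hcard i)

/-- Let `Q` be a positive definite symmetric `n×n` real matrix with `det Q = 1` and
`tr Q ≤ R + n` for some `R > 0`, and set `q = tr Q − n ≥ 0`. Then every eigenvalue `μ`
of `Q` satisfies `|μ − 1| ≤ (2(n−1)/n)^{1/2} (R+n)^{1 + 1/(2(n−1))} q^{1/2}`. -/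
theorem eigenvalue_near_one_bound (n : ℕ) (Q : Matrix (Fin n) (Fin n) ℝ)
    (hQ : Q.PosDef) (hdet : Q.det = 1) (R : ℝ) (hR : 0 < R) (htr : Q.trace ≤ R + n) :
    ∀ (μ : ℝ) (v : Fin n → ℝ), v ≠ 0 → Q.mulVec v = μ • v →
      |μ - 1| ≤ Real.sqrt (2 * ((n : ℝ) - 1) / n) *
        (R + n) ^ ((1 : ℝ) + 1 / (2 * ((n : ℝ) - 1))) * Real.sqrt (Q.trace - n) := by
  intro μ v hv hQv
  obtain ⟨i, rfl⟩ := hQ.isHermitian.exists_eigenvalues_eq hv hQv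
  have htrace : Q.trace = ∑ j, hQ.isHermitian.eigenvalues j := by
    simpa using hQ.isHermitian.trace_eq_sum_eigenvalues
  have hprod : ∏ j, hQ.isHermitian.eigenvalues j = 1 := by
    simpa [hdet] using hQ.isHermitian.det_eq_prod_eigenvalues.symm
  rw [htrace] at htr ⊢
  simpa using abs_sub_one_le_of_prod_eq_one hQ.eigenvalues_pos hprod hR.le
    (by simpa using htr) i
end

section
/- Let V be a finite-dimensional real inner product space. For any finite group W of orthogonal transformations of V, any X ∈ V, and any λ lying in the convex hull of the orbit W·ρ of a vector ρ ∈ V, one has Σ_{w∈W} exp(⟨wλ, X⟩) ≤ Σ_{w∈W} exp(⟨wρ, X⟩). -/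
open RealInnerProductSpace

private lemma convexOn_univ_sum' {E ι : Type*} [NormedAddCommGroup E] [InnerProductSpace ℝ E]
    (t : Finset ι) (f : ι → E → ℝ) (hf : ∀ i ∈ t, ConvexOn ℝ Set.univ (f i)) :
    ConvexOn ℝ Set.univ (fun x => ∑ i ∈ t, f i x) := by
  classical
  induction t using Finset.cons_induction with
  | empty => simpa using convexOn_const (0 : ℝ) convex_univ
  | cons a s ha ih =>
    simp only [Finset.sum_cons]
    exact (hf a (Finset.mem_cons_self a s)).add
      (ih fun i hi => hf i (Finset.mem_cons_of_mem hi))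

/-- For a finite group `W` acting orthogonally on a finite-dimensional real inner product
space `V`, any `X ∈ V`, and any `λ` in the convex hull of the orbit `W·ρ`, one has
`Σ_{w∈W} exp⟪wλ, X⟫ ≤ Σ_{w∈W} exp⟪wρ, X⟫`. -/
theorem sum_exp_inner_orbit_le {V : Type*} [NormedAddCommGroup V] [InnerProductSpace ℝ V]
    [FiniteDimensional ℝ V] (W : Type*) [Group W] [Fintype W]
    (φ : W →* (V ≃ₗᵢ[ℝ] V)) (ρ lam X : V)
    (hlam : lam ∈ convexHull ℝ (Set.range fun w : W => φ w ρ)) :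
    (∑ w : W, Real.exp ⟪φ w lam, X⟫) ≤ ∑ w : W, Real.exp ⟪φ w ρ, X⟫ := by
  set f : V → ℝ := fun μ => ∑ w : W, Real.exp ⟪φ w μ, X⟫ with hf
  -- convexity
  have hconv : ConvexOn ℝ Set.univ f := by
    apply convexOn_univ_sum'
    intro w _
    have hlin : ConvexOn ℝ Set.univ fun μ : V => Real.exp ⟪X, φ w μ⟫ := by
      have := convexOn_exp.comp_affineMap
        (((innerₛₗ ℝ X).comp (φ w).toLinearEquiv.toLinearMap).toAffineMap)
      simpa [Function.comp_def] using this
    convert hlin using 2 with μ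
    rw [real_inner_comm]
  obtain ⟨y, hy, hle⟩ := hconv.exists_ge_of_mem_convexHull (Set.subset_univ _) hlam
  obtain ⟨w₀, rfl⟩ := hy
  refine hle.trans_eq ?_
  show (∑ w : W, Real.exp ⟪φ w (φ w₀ ρ), X⟫) = ∑ w : W, Real.exp ⟪φ w ρ, X⟫
  rw [← Equiv.sum_comp (Equiv.mulRight w₀) (fun w => Real.exp ⟪φ w ρ, X⟫)]
  refine Finset.sum_congr rfl fun w _ => ?_
  simp [map_mul]
end

section
/- Let Φ be a reduced root system with positive roots Φ⁺ and simple roots Δ. For a positive root α, let V_α be the linear span of α together with all roots β, γ appearing in decompositions α = β + γ with β, γ ∈ Φ⁺. Then V_α equals the span of the simple roots δ with δ ≺ α (i.e., δ occurs with positive coefficient in the expansion of α in simple roots). -/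
open RealInnerProductSpace

/-- A reduced crystallographic root system `Φ` in a real inner product space,
together with a base `Δ` (set of simple roots), so that every root is either a
nonnegative or a nonpositive combination of the simple roots. -/
structure RootSystemBase (V : Type*) [NormedAddCommGroup V] [InnerProductSpace ℝ V] where
  /-- the (finite) set of roots -/
  Φ : Finset V
  /-- the base (set of simple roots) -/
  Δ : Finset V
  ne_zero : ∀ α ∈ Φ, α ≠ (0 : V)
  base_sub : Δ ⊆ Φ
  /-- `Φ` is stable under the reflection in each root -/
  reflect_mem : ∀ α ∈ Φ, ∀ β ∈ Φ, β - (2 * ⟪β, α⟫ / ⟪α, α⟫) • α ∈ Φ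
  /-- crystallographic condition: all Cartan pairings are integers -/
  crystal : ∀ α ∈ Φ, ∀ β ∈ Φ, ∃ n : ℤ, 2 * ⟪β, α⟫ / ⟪α, α⟫ = (n : ℝ)
  /-- reduced: the only multiples of a root which are roots are `±` itself -/
  reduced : ∀ α ∈ Φ, ∀ t : ℝ, t • α ∈ Φ → t = 1 ∨ t = -1
  base_indep : LinearIndependent ℝ (Subtype.val : {x // x ∈ Δ} → V)
  /-- every root is a nonnegative or nonpositive combination of simple roots -/
  pos_or_neg : ∀ α ∈ Φ,
    (∃ c : V → ℝ, (∀ d, 0 ≤ c d) ∧ α = ∑ d ∈ Δ, c d • d) ∨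
    (∃ c : V → ℝ, (∀ d, 0 ≤ c d) ∧ α = -(∑ d ∈ Δ, c d • d))

namespace RootSystemBase

variable {V : Type*} [NormedAddCommGroup V] [InnerProductSpace ℝ V]

/-- `α` is a positive root: a root which is a nonnegative combination of simple roots. -/
def IsPos (R : RootSystemBase V) (α : V) : Prop :=
  α ∈ R.Φ ∧ ∃ c : V → ℝ, (∀ d, 0 ≤ c d) ∧ α = ∑ d ∈ R.Δ, c d • d

/-- `α` is a negative root: a root which is a nonpositive combination of simple roots. -/
def IsNeg (R : RootSystemBase V) (α : V) : Prop :=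
  α ∈ R.Φ ∧ ∃ c : V → ℝ, (∀ d, 0 ≤ c d) ∧ α = -(∑ d ∈ R.Δ, c d • d)

/-- `δ ≺ α` : the simple root `δ` occurs with positive coefficient in `α`. -/
def Prec (R : RootSystemBase V) (δ α : V) : Prop :=
  ∃ c : V → ℝ, (∀ d, 0 ≤ c d) ∧ α = ∑ d ∈ R.Δ, c d • d ∧ 0 < c δ

end RootSystemBase

/-!
The inclusion `V_α ⊆ span {δ | δ ≺ α}` holds because a summand of `α` only involves simple roots
occurring in `α`. For the converse we induct on the height of `α`. Some simple root `δ₀` has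
`⟪α, δ₀⟫ > 0`, so either `α = δ₀` or `α = β + δ₀` with `β` a positive root. In the latter case
`β, δ₀ ∈ V_α`, every other `δ ≺ α` satisfies `δ ≺ β`, and `V_β ⊆ V_α`: for a decomposition
`β = x + y`, one of `x + δ₀`, `y + δ₀` is a root, and accordingly `α = (x + δ₀) + y` or
`α = x + (y + δ₀)` puts `x` into `V_α`.
-/

namespace RootSystemBase

variable {V : Type*} [NormedAddCommGroup V] [InnerProductSpace ℝ V] (R : RootSystemBase V)

section Roots

variable {x y : V}

lemma inner_self_pos (hx : x ∈ R.Φ) : 0 < ⟪x, x⟫ :=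
  real_inner_self_pos.2 (R.ne_zero x hx)

lemma neg_mem (hx : x ∈ R.Φ) : -x ∈ R.Φ := by
  have h := R.reflect_mem x hx x hx
  rwa [mul_div_assoc, div_self (R.inner_self_pos hx).ne', mul_one, two_smul, sub_add_cancel_left]
    at h

lemma inner_mul_inner_lt (hx : x ∈ R.Φ) (hy : y ∈ R.Φ) (hyx : y ≠ x) (hyx' : y ≠ -x) :
    ⟪x, y⟫ * ⟪x, y⟫ < ⟪x, x⟫ * ⟪y, y⟫ := by
  refine (real_inner_mul_inner_self_le x y).lt_of_ne fun heq => ?_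
  have hnorm : ‖⟪x, y⟫‖ = ‖x‖ * ‖y‖ := by
    rw [Real.norm_eq_abs, ← abs_of_nonneg (by positivity : 0 ≤ ‖x‖ * ‖y‖),
      ← sq_eq_sq_iff_abs_eq_abs, mul_pow, ← real_inner_self_eq_norm_sq,
      ← real_inner_self_eq_norm_sq, sq, heq]
  obtain ⟨r, -, rfl⟩ := (norm_inner_eq_norm_iff (R.ne_zero x hx) (R.ne_zero y hy)).1 hnorm
  rcases R.reduced x hx r hy with rfl | rfl
  · exact hyx (one_smul ℝ x)
  · exact hyx' (neg_one_smul ℝ x)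

/-- If `⟪x, y⟫ < 0`, one of the two Cartan integers is `-1` (otherwise their product, which is
`4 cos² θ`, would be at least `4`), and the corresponding reflection sends one root to `x + y`. -/
lemma add_mem_of_inner_neg (hx : x ∈ R.Φ) (hy : y ∈ R.Φ) (hxy : ⟪x, y⟫ < 0) (hne : x + y ≠ 0) :
    x + y ∈ R.Φ := by
  have hxx := R.inner_self_pos hx
  have hyy := R.inner_self_pos hy
  obtain ⟨n, hn⟩ := R.crystal y hy x hx
  obtain ⟨m, hm⟩ := R.crystal x hx y hy
  rw [real_inner_comm] at hm
  have hn0 : n < 0 := by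
    have : (n : ℝ) < 0 := hn ▸ div_neg_of_neg_of_pos (by linarith) hyy
    exact_mod_cast this
  have hm0 : m < 0 := by
    have : (m : ℝ) < 0 := hm ▸ div_neg_of_neg_of_pos (by linarith) hxx
    exact_mod_cast this
  by_cases hn1 : n = -1
  · have h := R.reflect_mem y hy x hx
    rw [hn, hn1] at h
    simpa using h
  by_cases hm1 : m = -1
  · have h := R.reflect_mem x hx y hy
    rw [real_inner_comm, hm, hm1] at h
    simpa [add_comm] using h
  have hprod : (4 : ℝ) ≤ n * m := by
    have : (4 : ℤ) ≤ n * m := by nlinarith [(by omega : n ≤ -2), (by omega : m ≤ -2)]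
    exact_mod_cast this
  rw [← hn, ← hm, div_mul_div_comm, le_div_iff₀ (by positivity)] at hprod
  refine absurd (R.inner_mul_inner_lt hx hy ?_ (fun h => hne (by rw [h, add_neg_cancel])))
    (by nlinarith)
  rintro rfl
  linarith

lemma sub_mem_of_inner_pos (hx : x ∈ R.Φ) (hy : y ∈ R.Φ) (hxy : 0 < ⟪x, y⟫) (hne : x ≠ y) :
    x - y ∈ R.Φ := by
  rw [sub_eq_add_neg]
  exact R.add_mem_of_inner_neg hx (R.neg_mem hy) (by rwa [inner_neg_right, neg_lt_zero])
    (fun h => hne (add_neg_eq_zero.1 h))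

/-- If `⟪a, c⟫ < 0` or `⟪b, c⟫ < 0` this is `add_mem_of_inner_neg`; if `⟪s, a⟫ > 0` or
`⟪s, b⟫ > 0` for `s = a + b + c` it is `sub_mem_of_inner_pos`; and otherwise
`⟪s, s⟫ ≤ ⟪s, c⟫ ≥ ⟪c, c⟫`, which Cauchy–Schwarz only allows for `s = c`. -/
lemma add_mem_or_add_mem {a b c : V} (ha : a ∈ R.Φ) (hb : b ∈ R.Φ) (hc : c ∈ R.Φ)
    (hs : a + b + c ∈ R.Φ) (hab : a + b ≠ 0) (hac : a + c ≠ 0) (hbc : b + c ≠ 0) :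
    a + c ∈ R.Φ ∨ b + c ∈ R.Φ := by
  by_cases hac' : ⟪a, c⟫ < 0
  · exact .inl (R.add_mem_of_inner_neg ha hc hac' hac)
  by_cases hbc' : ⟪b, c⟫ < 0
  · exact .inr (R.add_mem_of_inner_neg hb hc hbc' hbc)
  by_cases hsa : 0 < ⟪a + b + c, a⟫
  · have h := R.sub_mem_of_inner_pos hs ha hsa fun h => hbc (by rwa [add_assoc, add_eq_left] at h)
    rw [add_assoc, add_sub_cancel_left] at h
    exact .inr h
  by_cases hsb : 0 < ⟪a + b + c, b⟫
  · have h := R.sub_mem_of_inner_pos hs hb hsb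
      fun h => hac (by rwa [add_right_comm, add_eq_right] at h)
    rw [add_right_comm, add_sub_cancel_right] at h
    exact .inl h
  push Not at hac' hbc' hsa hsb
  have hss := R.inner_self_pos hs
  have hcc := R.inner_self_pos hc
  have hs_le : ⟪a + b + c, a + b + c⟫ ≤ ⟪a + b + c, c⟫ := by
    rw [inner_add_right, inner_add_right]
    linarith
  have hc_le : ⟪c, c⟫ ≤ ⟪a + b + c, c⟫ := by
    rw [inner_add_left, inner_add_left]
    linarith
  refine absurd (R.inner_mul_inner_lt hs hc ?_ ?_) (not_lt.2 (by nlinarith))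
  · exact fun h => hab (add_eq_right.1 h.symm)
  · intro h
    have : ⟪a + b + c, c⟫ = -⟪a + b + c, a + b + c⟫ := by rw [← inner_neg_right, ← h]
    linarith

end Roots

section Coordinates

lemma linearIndepOn_base : LinearIndepOn ℝ id (R.Δ : Set V) := R.base_indep

/-- Coefficient of `δ` with respect to a basis of `V` extending `Δ`; `0` when `δ ∉ Δ`. -/
noncomputable def coeff (δ : V) : V →ₗ[ℝ] ℝ :=
  open Classical in
  if hδ : δ ∈ R.Δ then
    (Module.Basis.extend R.linearIndepOn_base).coord ⟨δ, R.linearIndepOn_base.subset_extend _ hδ⟩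
  else 0

variable {R} {δ d : V}

lemma coeff_apply_simple (hδ : δ ∈ R.Δ) (hd : d ∈ R.Δ) :
    R.coeff δ d = Finsupp.single (⟨d, R.linearIndepOn_base.subset_extend _ hd⟩ :
      R.linearIndepOn_base.extend (Set.subset_univ _)) (1 : ℝ)
        ⟨δ, R.linearIndepOn_base.subset_extend _ hδ⟩ := by
  have hb : Module.Basis.extend R.linearIndepOn_base
      ⟨d, R.linearIndepOn_base.subset_extend _ hd⟩ = d :=
    Module.Basis.extend_apply_self _ _
  rw [coeff, dif_pos hδ]
  conv_lhs => rw [← hb]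
  rw [Module.Basis.coord_apply, Module.Basis.repr_self]

lemma coeff_self (hδ : δ ∈ R.Δ) : R.coeff δ δ = 1 := by
  rw [coeff_apply_simple hδ hδ, Finsupp.single_eq_same]

lemma coeff_of_ne (hδ : δ ∈ R.Δ) (hd : d ∈ R.Δ) (hne : d ≠ δ) : R.coeff δ d = 0 := by
  rw [coeff_apply_simple hδ hd, Finsupp.single_eq_of_ne (by simpa using hne.symm)]

lemma coeff_sum_smul (hδ : δ ∈ R.Δ) (c : V → ℝ) : R.coeff δ (∑ d ∈ R.Δ, c d • d) = c δ := by
  rw [map_sum, Finset.sum_eq_single_of_mem δ hδ fun d hd hne => by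
    rw [map_smul, coeff_of_ne hδ hd hne, smul_zero], map_smul, coeff_self hδ, smul_eq_mul, mul_one]

variable (R) in
noncomputable def height : V →ₗ[ℝ] ℝ := ∑ δ ∈ R.Δ, R.coeff δ

lemma height_sum_smul (c : V → ℝ) : R.height (∑ d ∈ R.Δ, c d • d) = ∑ d ∈ R.Δ, c d := by
  rw [height, LinearMap.sum_apply]
  exact Finset.sum_congr rfl fun δ hδ => coeff_sum_smul hδ c

lemma height_simple (hδ : δ ∈ R.Δ) : R.height δ = 1 := by
  rw [height, LinearMap.sum_apply, Finset.sum_eq_single_of_mem δ hδ fun d hd hne =>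
    coeff_of_ne hd hδ hne.symm, coeff_self hδ]

end Coordinates

section Positive

variable {R} {α δ δ₀ x y : V}

lemma IsPos.height_pos (hα : R.IsPos α) : 0 < R.height α := by
  obtain ⟨hmem, c, hc, rfl⟩ := hα
  rw [height_sum_smul]
  refine (Finset.sum_nonneg fun d _ => hc d).lt_of_ne fun h => R.ne_zero _ hmem ?_
  exact Finset.sum_eq_zero fun d hd => by
    rw [(Finset.sum_eq_zero_iff_of_nonneg fun d _ => hc d).1 h.symm d hd, zero_smul]

lemma IsPos.add_ne_zero (hx : R.IsPos x) (hy : R.IsPos y) : x + y ≠ 0 := fun h => by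
  have := congrArg R.height h
  rw [map_add, map_zero] at this
  linarith [hx.height_pos, hy.height_pos]

lemma IsPos.add (hx : R.IsPos x) (hy : R.IsPos y) (hmem : x + y ∈ R.Φ) : R.IsPos (x + y) := by
  obtain ⟨-, cx, hcx, rfl⟩ := hx
  obtain ⟨-, cy, hcy, rfl⟩ := hy
  exact ⟨hmem, cx + cy, fun d => add_nonneg (hcx d) (hcy d),
    by simp only [Pi.add_apply, add_smul, Finset.sum_add_distrib]⟩

lemma isPos_simple (hδ : δ ∈ R.Δ) : R.IsPos δ := by
  classical
  refine ⟨R.base_sub hδ, fun d => if d = δ then 1 else 0,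
    fun _ => ite_nonneg zero_le_one le_rfl, ?_⟩
  simp [ite_smul, Finset.sum_ite_eq', hδ]

lemma prec_iff_coeff_pos (hα : R.IsPos α) (hδ : δ ∈ R.Δ) : R.Prec δ α ↔ 0 < R.coeff δ α := by
  constructor
  · rintro ⟨c, -, rfl, hpos⟩
    rwa [coeff_sum_smul hδ]
  · obtain ⟨-, c, hc, rfl⟩ := hα
    rw [coeff_sum_smul hδ]
    exact fun hpos => ⟨c, hc, rfl, hpos⟩

lemma eq_of_prec_simple (hδ : δ ∈ R.Δ) (hδ₀ : δ₀ ∈ R.Δ) (h : R.Prec δ δ₀) : δ = δ₀ := by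
  by_contra hne
  have hpos := (prec_iff_coeff_pos (isPos_simple hδ₀) hδ).1 h
  rw [coeff_of_ne hδ hδ₀ (Ne.symm hne)] at hpos
  exact hpos.false

/-- If `α - δ₀` were negative, all coefficients of `α` except the one at `δ₀` would vanish, so `α`
would be a multiple of `δ₀`, hence `δ₀` itself as `Φ` is reduced. -/
lemma IsPos.sub_simple (hα : R.IsPos α) (hδ₀ : δ₀ ∈ R.Δ) (hne : α ≠ δ₀) (hmem : α - δ₀ ∈ R.Φ) :
    R.IsPos (α - δ₀) := by
  refine ⟨hmem, (R.pos_or_neg _ hmem).resolve_right fun ⟨c', hc', hneg⟩ => ?_⟩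
  obtain ⟨hαΦ, c, hc, hαc⟩ := hα
  have hzero : ∀ d ∈ R.Δ, d ≠ δ₀ → c d = 0 := fun d hd hd₀ => by
    have h := congrArg (R.coeff d) hneg
    rw [hαc, map_sub, map_neg, coeff_sum_smul hd, coeff_sum_smul hd,
      coeff_of_ne hd hδ₀ hd₀.symm, sub_zero] at h
    linarith [hc d, hc' d]
  have hαδ₀ : α = c δ₀ • δ₀ := by
    rw [hαc, Finset.sum_eq_single_of_mem δ₀ hδ₀ fun d hd hd₀ => by rw [hzero d hd hd₀, zero_smul]]
  rcases R.reduced δ₀ (R.base_sub hδ₀) (c δ₀) (hαδ₀ ▸ hαΦ) with h | h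
  · exact hne (by rw [hαδ₀, h, one_smul])
  · linarith [hc δ₀]

lemma IsPos.exists_simple_inner_pos (hα : R.IsPos α) : ∃ δ₀ ∈ R.Δ, 0 < ⟪α, δ₀⟫ := by
  obtain ⟨hαΦ, c, hc, hαc⟩ := hα
  have hexp : ⟪α, ∑ d ∈ R.Δ, c d • d⟫ = ∑ d ∈ R.Δ, c d * ⟪α, d⟫ := by
    simp only [inner_sum, real_inner_smul_right]
  rw [← hαc] at hexp
  have hsum : ∑ _d ∈ R.Δ, (0 : ℝ) < ∑ d ∈ R.Δ, c d * ⟪α, d⟫ := by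
    rw [Finset.sum_const_zero, ← hexp]
    exact R.inner_self_pos hαΦ
  obtain ⟨d, hd, hpos⟩ := Finset.exists_lt_of_sum_lt hsum
  exact ⟨d, hd, pos_of_mul_pos_right hpos (hc d)⟩

end Positive

section Spans

variable {α β γ δ δ₀ : V}

def summands (α : V) : Set V := {β | ∃ γ, R.IsPos β ∧ R.IsPos γ ∧ α = β + γ}

/-- The space `V_α`. -/
def decompSpan (α : V) : Submodule ℝ V := Submodule.span ℝ ({α} ∪ R.summands α)

variable {R}

lemma Prec.add_right (h : R.Prec δ β) (hγ : R.IsPos γ) : R.Prec δ (β + γ) := by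
  obtain ⟨c, hc, rfl, hpos⟩ := h
  obtain ⟨-, c', hc', rfl⟩ := hγ
  exact ⟨c + c', fun d => add_nonneg (hc d) (hc' d),
    by simp only [Pi.add_apply, add_smul, Finset.sum_add_distrib],
    add_pos_of_pos_of_nonneg hpos (hc' δ)⟩

lemma IsPos.mem_span_prec (hα : R.IsPos α) :
    α ∈ Submodule.span ℝ {δ | δ ∈ R.Δ ∧ R.Prec δ α} := by
  obtain ⟨-, c, hc, rfl⟩ := hα
  refine Submodule.sum_mem _ fun d hd => ?_
  rcases (hc d).eq_or_lt with h | h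
  · rw [← h, zero_smul]
    exact zero_mem _
  · exact Submodule.smul_mem _ _ (Submodule.subset_span ⟨hd, c, hc, rfl, h⟩)

lemma decompSpan_le_span_prec (hα : R.IsPos α) :
    R.decompSpan α ≤ Submodule.span ℝ {δ | δ ∈ R.Δ ∧ R.Prec δ α} := by
  refine Submodule.span_le.2 (Set.union_subset (Set.singleton_subset_iff.2 hα.mem_span_prec) ?_)
  rintro β ⟨γ, hβ, hγ, rfl⟩
  refine Submodule.span_mono ?_ hβ.mem_span_prec
  exact fun _ h => ⟨h.1, h.2.add_right hγ⟩

lemma summands_subset_decompSpan_add_simple (hβ : R.IsPos β) (hδ₀ : δ₀ ∈ R.Δ)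
    (hmem : β + δ₀ ∈ R.Φ) : R.summands β ⊆ R.decompSpan (β + δ₀) := by
  rintro x ⟨y, hx, hy, rfl⟩
  have hδ₀pos := isPos_simple hδ₀
  rcases R.add_mem_or_add_mem hx.1 hy.1 hδ₀pos.1 hmem (hx.add_ne_zero hy)
    (hx.add_ne_zero hδ₀pos) (hy.add_ne_zero hδ₀pos) with h | h
  · have hxδ₀ : x + δ₀ ∈ R.decompSpan (x + y + δ₀) :=
      Submodule.subset_span (.inr ⟨y, hx.add hδ₀pos h, hy, add_right_comm _ _ _⟩)
    have hδ₀mem : δ₀ ∈ R.decompSpan (x + y + δ₀) :=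
      Submodule.subset_span (.inr ⟨x + y, hδ₀pos, hβ, add_comm _ _⟩)
    simpa using Submodule.sub_mem _ hxδ₀ hδ₀mem
  · exact Submodule.subset_span (.inr ⟨y + δ₀, hx, hy.add hδ₀pos h, add_assoc _ _ _⟩)

lemma card_filter_height_lt_lt (hβ : β ∈ R.Φ) (h : R.height β < R.height α) :
    (R.Φ.filter (R.height · < R.height β)).card < (R.Φ.filter (R.height · < R.height α)).card :=
  Finset.card_lt_card <| Finset.ssubset_iff_of_subset
    (Finset.monotone_filter_right _ fun _ _ hz => hz.trans h) |>.2
    ⟨β, Finset.mem_filter.2 ⟨hβ, h⟩, fun hβ' => (Finset.mem_filter.1 hβ').2.false⟩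

end Spans

variable {R} in
theorem simple_mem_decompSpan {α δ : V} (hα : R.IsPos α) (hδ : δ ∈ R.Δ) (hprec : R.Prec δ α) :
    δ ∈ R.decompSpan α := by
  obtain ⟨δ₀, hδ₀, hinner⟩ := hα.exists_simple_inner_pos
  by_cases hαδ₀ : α = δ₀
  · subst hαδ₀
    rw [eq_of_prec_simple hδ hδ₀ hprec]
    exact Submodule.subset_span (.inl rfl)
  have hδ₀pos := isPos_simple hδ₀
  have hβ : R.IsPos (α - δ₀) :=
    hα.sub_simple hδ₀ hαδ₀ (R.sub_mem_of_inner_pos hα.1 hδ₀pos.1 hinner hαδ₀)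
  have hαβ : α = α - δ₀ + δ₀ := (sub_add_cancel α δ₀).symm
  by_cases hδδ₀ : δ = δ₀
  · exact hδδ₀ ▸ Submodule.subset_span (.inr ⟨α - δ₀, hδ₀pos, hβ, hαβ.trans (add_comm _ _)⟩)
  have hprecβ : R.Prec δ (α - δ₀) := by
    rw [prec_iff_coeff_pos hβ hδ, map_sub, coeff_of_ne hδ hδ₀ (Ne.symm hδδ₀), sub_zero]
    exact (prec_iff_coeff_pos hα hδ).1 hprec
  have hle : R.decompSpan (α - δ₀) ≤ R.decompSpan α := by
    refine Submodule.span_le.2 (Set.union_subset (Set.singleton_subset_iff.2 ?_) ?_)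
    · exact Submodule.subset_span (.inr ⟨δ₀, hβ, hδ₀pos, hαβ⟩)
    · have h := summands_subset_decompSpan_add_simple hβ hδ₀ (by rw [sub_add_cancel]; exact hα.1)
      rwa [sub_add_cancel] at h
  exact hle (simple_mem_decompSpan hβ hδ hprecβ)
termination_by (R.Φ.filter (R.height · < R.height α)).card
decreasing_by
  exact card_filter_height_lt_lt hβ.1 (by rw [map_sub, height_simple hδ₀]; linarith)

end RootSystemBase

/-- For a positive root `α`, let `V_α` be the span of `α` together with all summands
`β, γ` of decompositions `α = β + γ` into two positive roots. Then `V_α` equals the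
span of the simple roots `δ` with `δ ≺ α`. -/
theorem span_decomposition_summands_eq {V : Type*} [NormedAddCommGroup V]
    [InnerProductSpace ℝ V] (R : RootSystemBase V) (α : V) (hα : R.IsPos α) :
    Submodule.span ℝ ({α} ∪ {β : V | ∃ γ : V, R.IsPos β ∧ R.IsPos γ ∧ α = β + γ}) =
      Submodule.span ℝ {δ : V | δ ∈ R.Δ ∧ R.Prec δ α} :=
  le_antisymm (R.decompSpan_le_span_prec hα) <|
    Submodule.span_le.2 fun _ ⟨hδ, hprec⟩ => R.simple_mem_decompSpan hα hδ hprec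
end

section
/- Let Φ be a reduced root system with Weyl group W acting on the Euclidean space V, and let w ∈ W be regular (Φ⁺_{w⁻¹} spans V*). Let V^w be the subspace of w-invariant vectors. Then for every α ∈ Φ⁺_{w⁻¹} whose coroot α∨ does not vanish identically on V^w, there exists β ∈ Φ⁺_{w⁻¹}, β ≠ α, such that the restrictions of β∨ and −α∨ to V^w coincide. -/
open RealInnerProductSpace

/-!
Iterating `w⁻¹` on `α` eventually returns to `α`, since `w⁻¹` permutes the finite set of roots.
As `w⁻¹α` is negative, there is a first passage from a negative root `γ = w^{-j}α` to a positive
root `w⁻¹γ`. Then `β = -γ` is positive with `w⁻¹β < 0`, and since `w^{-j}` is an isometry fixing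
`V^w` pointwise, `β∨` restricts to `-α∨` on `V^w`. As `α∨` does not vanish on `V^w`, `β ≠ α`.
-/

open Function Set

theorem Function.Injective.mem_periodicPts_of_mapsTo {α : Type*} {f : α → α} (hf : Injective f)
    {s : Set α} (hs : s.Finite) (hmaps : MapsTo f s s) {a : α} (ha : a ∈ s) :
    a ∈ periodicPts f :=
  have : Finite s := hs
  (show Semiconj Subtype.val (hmaps.restrict f s s) f from fun _ ↦ rfl).mapsTo_periodicPts
    ((hmaps.restrict_inj.mpr hf.injOn).mem_periodicPts ⟨a, ha⟩)

theorem LinearIsometryEquiv.inner_iterate_map_iterate {𝕜 E : Type*} [RCLike 𝕜]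
    [SeminormedAddCommGroup E] [InnerProductSpace 𝕜 E] (e : E ≃ₗᵢ[𝕜] E) (k : ℕ) (u v : E) :
    inner 𝕜 (e^[k] u) (e^[k] v) = inner 𝕜 u v := by
  induction k generalizing u v with
  | zero => rfl
  | succ k ih => rw [iterate_succ_apply, iterate_succ_apply, ih, e.inner_map_map]

namespace RootSystemBase

variable {V : Type*} [NormedAddCommGroup V] [InnerProductSpace ℝ V] (R : RootSystemBase V)

theorem neg_mem_s10 {α : V} (hα : α ∈ R.Φ) : -α ∈ R.Φ := by
  have h := R.reflect_mem α hα α hα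
  rwa [mul_div_assoc, div_self (inner_self_ne_zero.mpr (R.ne_zero α hα)), mul_one, two_smul,
    sub_add_cancel_left] at h

variable {R}

theorem IsPos.not_isNeg {α : V} (hpos : R.IsPos α) : ¬ R.IsNeg α := by
  rintro ⟨-, c', hc', hα'⟩
  obtain ⟨hΦ, c, hc, hα⟩ := hpos
  have hsum : ∑ d ∈ R.Δ, (c d + c' d) • d = 0 := by
    simp only [add_smul, Finset.sum_add_distrib, ← hα]
    rw [hα', neg_add_cancel]
  have hc0 : ∀ d ∈ R.Δ, c d = 0 := fun d hd ↦ by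
    linarith [linearIndepOn_finset_iff.mp
      (show LinearIndepOn ℝ id (R.Δ : Set V) from R.base_indep) _ hsum d hd, hc d, hc' d]
  exact R.ne_zero α hΦ (hα ▸ Finset.sum_eq_zero fun d hd ↦ by simp [hc0 d hd])

theorem IsNeg.not_isPos {α : V} (hneg : R.IsNeg α) : ¬ R.IsPos α :=
  fun hpos ↦ hpos.not_isNeg hneg

theorem isNeg_of_not_isPos {α : V} (hα : α ∈ R.Φ) (hpos : ¬ R.IsPos α) : R.IsNeg α :=
  (R.pos_or_neg α hα).elim (fun h ↦ absurd ⟨hα, h⟩ hpos) fun h ↦ ⟨hα, h⟩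

theorem IsPos.neg_isNeg {α : V} (hpos : R.IsPos α) : R.IsNeg (-α) := by
  obtain ⟨hΦ, c, hc, rfl⟩ := hpos
  exact ⟨R.neg_mem_s10 hΦ, c, hc, rfl⟩

theorem IsNeg.neg_isPos {α : V} (hneg : R.IsNeg α) : R.IsPos (-α) := by
  obtain ⟨hΦ, c, hc, rfl⟩ := hneg
  exact ⟨R.neg_mem_s10 hΦ, c, hc, neg_neg _⟩

end RootSystemBase

theorem exists_opposite_coroot_on_invariants_general {V : Type*} [NormedAddCommGroup V]
    [InnerProductSpace ℝ V] (R : RootSystemBase V) (w : V ≃ₗᵢ[ℝ] V)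
    (hw : ∀ α ∈ R.Φ, w α ∈ R.Φ ∧ w.symm α ∈ R.Φ)
    (α : V) (hα : R.IsPos α) (hαneg : R.IsNeg (w.symm α))
    (hnv : ∃ x : V, w x = x ∧ ⟪α, x⟫ ≠ 0) :
    ∃ β : V, R.IsPos β ∧ R.IsNeg (w.symm β) ∧ β ≠ α ∧
      ∀ x : V, w x = x → 2 * ⟪β, x⟫ / ⟪β, β⟫ = -(2 * ⟪α, x⟫ / ⟪α, α⟫) := by
  have hmaps : MapsTo w.symm R.Φ R.Φ := fun β hβ ↦ (hw β hβ).2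
  obtain ⟨n, hn, hper⟩ := mem_periodicPts.mp
    (w.symm.injective.mem_periodicPts_of_mapsTo R.Φ.finite_toSet hmaps hα.1)
  obtain ⟨k, hk, hk_succ⟩ := Nat.exists_not_and_succ_of_not_zero_of_exists
    (p := fun k ↦ R.IsPos (w.symm^[k + 1] α)) hαneg.not_isPos
    ⟨n - 1, by simpa only [Nat.sub_add_cancel hn, hper.eq] using hα⟩
  set γ := w.symm^[k + 1] α
  have hγ : R.IsNeg γ := R.isNeg_of_not_isPos (hmaps.iterate _ hα.1) hk
  have hγx : ∀ x, w x = x → ⟪γ, x⟫ = ⟪α, x⟫ := fun x hx ↦ by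
    have hfix : w.symm x = x := w.symm_apply_eq.mpr hx.symm
    simpa only [iterate_fixed hfix] using w.symm.inner_iterate_map_iterate (k + 1) α x
  obtain ⟨x₀, hx₀, hαx₀⟩ := hnv
  refine ⟨-γ, hγ.neg_isPos, ?_, fun h ↦ hαx₀ ?_, fun x hx ↦ ?_⟩
  · rw [map_neg, ← iterate_succ_apply' w.symm]
    exact hk_succ.neg_isNeg
  · linarith [h ▸ inner_neg_left (𝕜 := ℝ) γ x₀, hγx x₀ hx₀]
  · rw [inner_neg_left, inner_neg_neg, hγx x hx, w.symm.inner_iterate_map_iterate]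
    ring

/-- Let `w` be a regular Weyl group element (the positive roots `α` with `w⁻¹α < 0` span
`V`), and let `V^w` be the space of `w`-invariant vectors. Then for every positive root
`α` with `w⁻¹α < 0` whose coroot does not vanish identically on `V^w`, there exists
another positive root `β ≠ α` with `w⁻¹β < 0` such that the restrictions of `β∨` and
`−α∨` to `V^w` coincide. -/
theorem exists_opposite_coroot_on_invariants {V : Type*} [NormedAddCommGroup V]
    [InnerProductSpace ℝ V] (R : RootSystemBase V) (w : V ≃ₗᵢ[ℝ] V)
    (hw : ∀ α ∈ R.Φ, w α ∈ R.Φ ∧ w.symm α ∈ R.Φ)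
    (hreg : Submodule.span ℝ {α : V | R.IsPos α ∧ R.IsNeg (w.symm α)} = ⊤)
    (α : V) (hα : R.IsPos α) (hαneg : R.IsNeg (w.symm α))
    (hnv : ∃ x : V, w x = x ∧ ⟪α, x⟫ ≠ 0) :
    ∃ β : V, R.IsPos β ∧ R.IsNeg (w.symm β) ∧ β ≠ α ∧
      ∀ x : V, w x = x → 2 * ⟪β, x⟫ / ⟪β, β⟫ = -(2 * ⟪α, x⟫ / ⟪α, α⟫) :=
  exists_opposite_coroot_on_invariants_general R w hw α hα hαneg hnv
end

section
/- In the root system A_{n−1} realized as {e_i − e_j : i ≠ j} ⊂ ℝⁿ with positive roots {e_i − e_j : i < j}: for any subset I ⊂ {1,…,n} with ∅ ≠ I ≠ {1,…,n}, suppose there exist j₁ < i < j₂ with j₁, j₂ ∉ I and i ∈ I (or j₁, j₂ ∈ I and i ∉ I). Then there exists an injection ι from the set Φ⁺_i = {e_k − e_i : k < i} ∪ {e_i − e_j : i < j} into the set Φ⁺_{¬M} = {e_a − e_b : a < b, exactly one of a, b lies in I}, such that ι(α) − α is a nonnegative combination of positive roots for every α. -/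
/-- the standard basis vector `e_i` of `ℝⁿ` -/
noncomputable def stdVec (n : ℕ) (i : Fin n) : Fin n → ℝ := Pi.single i 1

/-- the set `Φ⁺_i` of positive roots of `A_{n-1}` involving the index `i` -/
def PhiI (n : ℕ) (i : Fin n) : Set (Fin n → ℝ) :=
  {v | (∃ k, k < i ∧ v = stdVec n k - stdVec n i) ∨ (∃ j, i < j ∧ v = stdVec n i - stdVec n j)}

/-- the set `Φ⁺_{¬M}` of positive roots `e_a − e_b` with exactly one of `a, b` in `I` -/
def PhiNotM (n : ℕ) (I : Finset (Fin n)) : Set (Fin n → ℝ) :=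
  {v | ∃ a b : Fin n, a < b ∧ ((a ∈ I ∧ b ∉ I) ∨ (a ∉ I ∧ b ∈ I)) ∧
        v = stdVec n a - stdVec n b}

/-- `v` is a nonnegative combination of the positive roots `e_a − e_b`, `a < b`. -/
def InPosCone (n : ℕ) (v : Fin n → ℝ) : Prop :=
  ∃ c : Fin n × Fin n → ℝ, (∀ p, 0 ≤ c p) ∧
    v = ∑ p : Fin n × Fin n, (if p.1 < p.2 then c p else 0) • (stdVec n p.1 - stdVec n p.2)

/-!
A root `e_k − e_i` (`k < i`) or `e_i − e_j` (`i < j`) whose other endpoint lies on the same side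
of `I` as `i` is sent to `e_k − e_{j₂}`, resp. `e_{j₁} − e_j`: replacing `i` by an endpoint on
the other side separates the pair and raises the root by the positive root `e_i − e_{j₂}`,
resp. `e_{j₁} − e_i`. Roots already separated by `I` are kept. The map is built on index pairs,
where `(a, b) ↦ e_a − e_b` is injective off the diagonal, and transported to vectors.
-/

open Set Function

lemma Set.InjOn.exists_injOn_mapsTo_image {α β : Type*} {f : α → β} {φ : α → α}
    {S T : Set α} (hfS : InjOn f S) (hfT : InjOn f T) (hφ : InjOn φ S) (hST : MapsTo φ S T) :
    ∃ ι : β → β, InjOn ι (f '' S) ∧ MapsTo ι (f '' S) (f '' T) ∧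
      ∀ a ∈ S, ι (f a) = f (φ a) := by
  set ι := extend (S.domRestrict f) (S.domRestrict (f ∘ φ)) id
  have hι : ∀ a ∈ S, ι (f a) = f (φ a) := fun a ha =>
    hfS.injective.extend_apply _ _ ⟨a, ha⟩
  refine ⟨ι, ?_, ?_, hι⟩
  · exact InjOn.image_of_comp ((hfT.comp hφ hST).congr fun a ha => (hι a ha).symm)
  · exact mapsTo_image_iff.2 (((mapsTo_image f T).comp hST).congr fun a ha => (hι a ha).symm)

namespace TypeA

variable {n : ℕ}

noncomputable def root (n : ℕ) (p : Fin n × Fin n) : Fin n → ℝ := stdVec n p.1 - stdVec n p.2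

lemma root_injOn : InjOn (root n) {p | p.1 ≠ p.2} := by
  rintro ⟨a, b⟩ hab ⟨c, d⟩ hcd h
  have ha := congrFun h a
  have hb := congrFun h b
  simp only [mem_ofPred_eq] at hab hcd
  simp only [root, stdVec, Pi.sub_apply, Pi.single_eq_same, Pi.single_apply] at ha hb
  grind

lemma inPosCone_zero : InPosCone n 0 :=
  ⟨0, fun _ => le_rfl, by simp⟩

lemma inPosCone_root {p : Fin n × Fin n} (hp : p.1 < p.2) : InPosCone n (root n p) := by
  refine ⟨Pi.single p 1, fun q => ?_, ?_⟩
  · by_cases hq : q = p <;> simp [hq]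
  · rw [Fintype.sum_eq_single p fun q hq => by simp [hq]]
    simp [hp, root]

def incidentPairs (n : ℕ) (i : Fin n) : Set (Fin n × Fin n) :=
  {p | p.1 < p.2 ∧ (p.1 = i ∨ p.2 = i)}

def separatedPairs (I : Finset (Fin n)) : Set (Fin n × Fin n) :=
  {p | p.1 < p.2 ∧ ¬(p.1 ∈ I ↔ p.2 ∈ I)}

lemma phiI_eq_image (i : Fin n) : PhiI n i = root n '' incidentPairs n i := by
  ext v
  simp only [PhiI, incidentPairs, root, mem_ofPred_eq, mem_image, Prod.exists]
  grind

lemma phiNotM_eq_image (I : Finset (Fin n)) : PhiNotM n I = root n '' separatedPairs I := by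
  ext v
  simp only [PhiNotM, separatedPairs, root, mem_ofPred_eq, mem_image, Prod.exists]
  grind

variable (I : Finset (Fin n)) {i j₁ j₂ : Fin n}

def shiftPair (i j₁ j₂ : Fin n) (p : Fin n × Fin n) : Fin n × Fin n :=
  if p.1 ∈ I ↔ p.2 ∈ I then (if p.1 = i then (j₁, p.2) else (p.1, j₂)) else p

lemma shiftPair_mapsTo (hj₁ : j₁ < i) (hi : i < j₂) (hI₁ : ¬(j₁ ∈ I ↔ i ∈ I))
    (hI₂ : ¬(j₂ ∈ I ↔ i ∈ I)) :
    MapsTo (shiftPair I i j₁ j₂) (incidentPairs n i) (separatedPairs I) := by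
  rintro ⟨a, b⟩ ⟨hab, hp⟩
  simp only [shiftPair, separatedPairs, mem_ofPred_eq] at *
  split_ifs <;> grind

lemma shiftPair_injOn (hI₁ : ¬(j₁ ∈ I ↔ i ∈ I)) (hI₂ : ¬(j₂ ∈ I ↔ i ∈ I)) :
    InjOn (shiftPair I i j₁ j₂) (incidentPairs n i) := by
  -- Moved pairs avoid `i` while fixed ones contain it, and a pair moved to `(k, j₂)` is not one
  -- moved to `(j₁, j)`, since `k` lies on the side of `i` and `j₁` does not.
  rintro ⟨a, b⟩ ⟨hab, hp⟩ ⟨c, d⟩ ⟨hcd, hq⟩ h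
  simp only [shiftPair] at *
  split_ifs at h <;> grind

lemma inPosCone_root_shiftPair_sub (hj₁ : j₁ < i) (hi : i < j₂) {p : Fin n × Fin n}
    (hp : p ∈ incidentPairs n i) :
    InPosCone n (root n (shiftPair I i j₁ j₂ p) - root n p) := by
  obtain ⟨a, b⟩ := p
  unfold shiftPair
  split_ifs with hsame hai
  · rw [show root n (j₁, b) - root n (a, b) = root n (j₁, a) by simp [root]]
    subst hai
    exact inPosCone_root hj₁
  · obtain rfl : b = i := hp.2.resolve_left hai
    rw [show root n (a, j₂) - root n (a, b) = root n (b, j₂) by simp [root]]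
    exact inPosCone_root hi
  · rw [sub_self]
    exact inPosCone_zero

end TypeA

open TypeA

theorem exists_injection_PhiI_le_PhiNotM_general (n : ℕ) (I : Finset (Fin n)) (i : Fin n)
    (h : ∃ j₁ j₂ : Fin n, j₁ < i ∧ i < j₂ ∧
        ((j₁ ∉ I ∧ j₂ ∉ I ∧ i ∈ I) ∨ (j₁ ∈ I ∧ j₂ ∈ I ∧ i ∉ I))) :
    ∃ ι : (Fin n → ℝ) → (Fin n → ℝ),
      Set.InjOn ι (PhiI n i) ∧ Set.MapsTo ι (PhiI n i) (PhiNotM n I) ∧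
      ∀ α ∈ PhiI n i, InPosCone n (ι α - α) := by
  obtain ⟨j₁, j₂, hj₁, hj₂, hsides⟩ := h
  have hI₁ : ¬(j₁ ∈ I ↔ i ∈ I) := by tauto
  have hI₂ : ¬(j₂ ∈ I ↔ i ∈ I) := by tauto
  obtain ⟨ι, hinj, hmaps, hι⟩ :=
    (root_injOn.mono fun p hp => hp.1.ne).exists_injOn_mapsTo_image
      (root_injOn.mono fun p hp => hp.1.ne) (shiftPair_injOn I hI₁ hI₂)
      (shiftPair_mapsTo I hj₁ hj₂ hI₁ hI₂)
  rw [phiI_eq_image, phiNotM_eq_image]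
  refine ⟨ι, hinj, hmaps, ?_⟩
  rintro _ ⟨p, hp, rfl⟩
  rw [hι p hp]
  exact inPosCone_root_shiftPair_sub I hj₁ hj₂ hp

/-- In the root system `A_{n−1}`: if there exist `j₁ < i < j₂` with `j₁, j₂ ∉ I`, `i ∈ I`
(or `j₁, j₂ ∈ I`, `i ∉ I`), then there is an injection `ι : Φ⁺_i → Φ⁺_{¬M}` with
`α ≤ ι(α)` for all `α`, i.e. `ι(α) − α` is a nonnegative combination of positive roots. -/
theorem exists_injection_PhiI_le_PhiNotM (n : ℕ) (I : Finset (Fin n))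
    (hne : I.Nonempty) (hproper : I ≠ Finset.univ) (i : Fin n)
    (h : ∃ j₁ j₂ : Fin n, j₁ < i ∧ i < j₂ ∧
        ((j₁ ∉ I ∧ j₂ ∉ I ∧ i ∈ I) ∨ (j₁ ∈ I ∧ j₂ ∈ I ∧ i ∉ I))) :
    ∃ ι : (Fin n → ℝ) → (Fin n → ℝ),
      Set.InjOn ι (PhiI n i) ∧ Set.MapsTo ι (PhiI n i) (PhiNotM n I) ∧
      ∀ α ∈ PhiI n i, InPosCone n (ι α - α) :=
  exists_injection_PhiI_le_PhiNotM_general n I i h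
end

section
/- Let Φ be of type Dₙ with n ≥ 5, with simple roots α₁,…,αₙ in Bourbaki numbering and λ in the closure of the positive Weyl chamber. Set x_η = λ_{n−1} + η λ_n for η ∈ {±1} and z_i = 1 + λ_i − λ_{n−1} for 1 ≤ i ≤ n−2. Then for every sign vector ε ∈ {±1}^{n} with ε_n = +1, letting N₁ = #{i ≤ n−2 : ε_i ≠ ε_{n−1}} and N₂ = #{(i,j) : i < j ≤ n−2, ε_i = ε_j}, if N₂ ≥ max(N₁, 1), then ∏_{i<j≤n}(1 + λ_i + ε_i ε_j λ_j) ≥ (1+x₁)(1+x₋₁)·∏_{i≤n−2} z_i (z_i + x₁ + x₋₁). -/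
/-!
Write `a = λ_{n−1}`, `b = λ_n`, `e = ε_{n−1}`, so that `|e b| ≤ a` and
`(1 + x₁)(1 + x₋₁) = (1 + a + e b)(1 + a − e b)`. On the right, the pair `(n−1, n)` gives
`1 + a + e b`; for `i ≤ n−2` the pairs `(i, n−1)`, `(i, n)` give at least `z_i (z_i + 2a)` when
`ε_i = e` and exactly `z_i (1 + λ_i − e b)` when `ε_i ≠ e`; and the `N₂` pairs `i < j ≤ n−2` with
`ε_i = ε_j` give at least `1 + 2a` each, the other pairs at least `1`. What remains is to absorb
`(1 + a − e b) ∏_{ε_i ≠ e} (1 + λ_i + a)` into `(1 + 2a)^{N₂} ∏_{ε_i ≠ e} (1 + λ_i − e b)`: each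
index `i` with `ε_i ≠ e` uses one factor `1 + 2a`, one of them also paying for `1 + a − e b`, and
when there is no such index a single factor `1 + 2a` pays for it; hence `N₂ ≥ max(N₁, 1)`.
-/

open Finset

section Peeling

variable {M : Type*} [CommMonoid M] {n : ℕ}

theorem Fin.prod_filter_val_lt_succ (g : Fin n → M) (j : Fin n) :
    ∏ i ∈ univ.filter (fun i : Fin n => (i : ℕ) < j + 1), g i
      = (∏ i ∈ univ.filter (fun i : Fin n => (i : ℕ) < j), g i) * g j := by
  have hset : univ.filter (fun i : Fin n => (i : ℕ) < j + 1)
      = insert j (univ.filter fun i : Fin n => (i : ℕ) < j) := by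
    ext i
    simp only [mem_filter, mem_univ, true_and, mem_insert, Fin.ext_iff]
    omega
  rw [hset, prod_insert (by simp), mul_comm]

theorem Fin.prod_pairs_filter_val_lt_succ (F : Fin n × Fin n → M) (j : Fin n) :
    ∏ p ∈ univ.filter (fun p : Fin n × Fin n => p.1 < p.2 ∧ (p.2 : ℕ) < j + 1), F p
      = (∏ p ∈ univ.filter (fun p : Fin n × Fin n => p.1 < p.2 ∧ (p.2 : ℕ) < j), F p)
        * ∏ i ∈ univ.filter (fun i : Fin n => (i : ℕ) < j), F (i, j) := by
  have hset : univ.filter (fun p : Fin n × Fin n => p.1 < p.2 ∧ (p.2 : ℕ) < j + 1)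
      = univ.filter (fun p : Fin n × Fin n => p.1 < p.2 ∧ (p.2 : ℕ) < j)
        ∪ (univ.filter fun i : Fin n => (i : ℕ) < j).image (·, j) := by
    ext ⟨i, k⟩
    simp only [mem_filter, mem_univ, true_and, mem_union, mem_image, Prod.mk.injEq,
      Fin.lt_def, Fin.ext_iff]
    constructor
    · intro h
      by_cases hk : (k : ℕ) < j
      · exact Or.inl ⟨h.1, hk⟩
      · exact Or.inr ⟨i, by omega, rfl, by omega⟩
    · rintro (h | ⟨i', h, h1, h2⟩) <;> omega
  have hdisj : Disjoint (univ.filter fun p : Fin n × Fin n => p.1 < p.2 ∧ (p.2 : ℕ) < j)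
      ((univ.filter fun i : Fin n => (i : ℕ) < j).image (·, j)) := by
    rw [disjoint_left]
    rintro ⟨i, k⟩ h h'
    simp only [mem_filter, mem_univ, true_and, mem_image, Prod.mk.injEq] at h h'
    obtain ⟨_, _, _, rfl⟩ := h'
    omega
  rw [hset, prod_union hdisj, prod_image (by simp)]

theorem Fin.prod_pairs_lt_split_last_two (F : Fin n × Fin n → M) (m l : Fin n)
    (hml : (m : ℕ) + 1 = l) (hl : (l : ℕ) + 1 = n) :
    ∏ p ∈ univ.filter (fun p : Fin n × Fin n => p.1 < p.2), F p
      = (∏ p ∈ univ.filter (fun p : Fin n × Fin n => p.1 < p.2 ∧ (p.2 : ℕ) < m), F p)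
        * (∏ i ∈ univ.filter (fun i : Fin n => (i : ℕ) < m), F (i, m) * F (i, l))
        * F (m, l) := by
  have hall : univ.filter (fun p : Fin n × Fin n => p.1 < p.2)
      = univ.filter (fun p : Fin n × Fin n => p.1 < p.2 ∧ (p.2 : ℕ) < l + 1) :=
    filter_congr fun p _ => by have := p.2.isLt; omega
  have hl' : univ.filter (fun p : Fin n × Fin n => p.1 < p.2 ∧ (p.2 : ℕ) < l)
      = univ.filter (fun p : Fin n × Fin n => p.1 < p.2 ∧ (p.2 : ℕ) < m + 1) :=
    filter_congr fun p _ => by omega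
  have hli : univ.filter (fun i : Fin n => (i : ℕ) < l)
      = univ.filter (fun i : Fin n => (i : ℕ) < m + 1) :=
    filter_congr fun i _ => by omega
  rw [hall, prod_pairs_filter_val_lt_succ, hl', prod_pairs_filter_val_lt_succ, hli,
    prod_filter_val_lt_succ, prod_mul_distrib]
  simp only [mul_assoc]

end Peeling

theorem Finset.pow_card_filter_le_prod {ι R : Type*} [CommSemiring R] [PartialOrder R]
    [IsOrderedRing R] (s : Finset ι) (q : ι → Prop) [DecidablePred q] (f : ι → R) {b : R}
    (hb : 0 ≤ b) (hq : ∀ x ∈ s, q x → b ≤ f x) (hnq : ∀ x ∈ s, ¬ q x → 1 ≤ f x) :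
    b ^ #(s.filter q) ≤ ∏ x ∈ s, f x := by
  rw [← prod_const]
  calc ∏ _ ∈ s.filter q, b ≤ ∏ x ∈ s.filter q, f x :=
        prod_le_prod (fun _ _ => hb) fun x hx => hq x (mem_filter.1 hx).1 (mem_filter.1 hx).2
    _ ≤ ∏ x ∈ s, f x :=
        prod_le_prod_of_subset_of_one_le (filter_subset _ _)
          (fun x hx => hb.trans (hq x (mem_filter.1 hx).1 (mem_filter.1 hx).2))
          fun x hx hxq => hnq x hx fun h => hxq (mem_filter.2 ⟨hx, h⟩)

section SignedProducts

variable {ι R : Type*} [CommRing R] [LinearOrder R] [IsStrictOrderedRing R] (L : ι → R) {a c : R}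

theorem mul_prod_le_pow_card_mul_prod_of_nonempty {S : Finset ι} (hS : S.Nonempty)
    (hc : |c| ≤ a) (hL : ∀ i ∈ S, a ≤ L i) :
    (1 + a - c) * ∏ i ∈ S, (1 + L i + a) ≤ (1 + 2 * a) ^ #S * ∏ i ∈ S, (1 + L i - c) := by
  obtain ⟨hca, hac⟩ := abs_le.1 hc
  induction hS using Nonempty.cons_induction with
  | singleton j =>
    have hj := hL j (mem_singleton_self j)
    simp only [prod_singleton, card_singleton, pow_one]
    -- the two sides differ by `(a + c) (L j - a)`
    nlinarith [mul_nonneg (by linarith : 0 ≤ a + c) (by linarith : 0 ≤ L j - a)]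
  | cons j s hj hs ih =>
    have hLj := hL j (mem_cons_self j s)
    have hLs : ∀ i ∈ s, a ≤ L i := fun i hi => hL i (mem_cons_of_mem hi)
    have hstep : 1 + L j + a ≤ (1 + 2 * a) * (1 + L j - c) := by
      nlinarith [mul_nonneg (by linarith : 0 ≤ a) (by linarith : 0 ≤ L j - c)]
    rw [prod_cons, prod_cons, card_cons, pow_succ]
    calc (1 + a - c) * ((1 + L j + a) * ∏ i ∈ s, (1 + L i + a))
        = (1 + L j + a) * ((1 + a - c) * ∏ i ∈ s, (1 + L i + a)) := by ring
      _ ≤ ((1 + 2 * a) * (1 + L j - c)) * ((1 + 2 * a) ^ #s * ∏ i ∈ s, (1 + L i - c)) :=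
        mul_le_mul hstep (ih hLs) (mul_nonneg (by linarith)
          (prod_nonneg fun i hi => by linarith [hLs i hi])) (by nlinarith)
      _ = (1 + 2 * a) ^ #s * (1 + 2 * a) * ((1 + L j - c) * ∏ i ∈ s, (1 + L i - c)) := by
        ring

theorem mul_prod_le_pow_mul_prod {S : Finset ι} {t : ℕ} (ht : max #S 1 ≤ t)
    (hc : |c| ≤ a) (hL : ∀ i ∈ S, a ≤ L i) :
    (1 + a - c) * ∏ i ∈ S, (1 + L i + a) ≤ (1 + 2 * a) ^ t * ∏ i ∈ S, (1 + L i - c) := by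
  obtain ⟨hca, hac⟩ := abs_le.1 hc
  have hpow : ∀ k ≤ t, (1 + 2 * a) ^ k ≤ (1 + 2 * a) ^ t :=
    fun k hk => pow_le_pow_right₀ (by linarith) hk
  rcases S.eq_empty_or_nonempty with rfl | hS
  · simp only [prod_empty, mul_one]
    calc 1 + a - c ≤ (1 + 2 * a) ^ 1 := by linarith
      _ ≤ (1 + 2 * a) ^ t := hpow 1 (le_of_max_le_right ht)
  · refine (mul_prod_le_pow_card_mul_prod_of_nonempty L hS hc hL).trans ?_
    exact mul_le_mul_of_nonneg_right (hpow _ (le_of_max_le_left ht))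
      (prod_nonneg fun i hi => by linarith [hL i hi])

theorem mul_prod_le_pow_mul_prod_signed (I : Finset ι) (ε : ι → R) {b e : R} {t : ℕ}
    (hε : ∀ i ∈ I, ε i = 1 ∨ ε i = -1) (he : e = 1 ∨ e = -1) (hb : |b| ≤ a)
    (hL : ∀ i ∈ I, a ≤ L i) (ht : max #(I.filter fun i => ε i ≠ e) 1 ≤ t) :
    (1 + a - e * b) * ∏ i ∈ I, (1 + L i - a) * (1 + L i + a)
      ≤ (1 + 2 * a) ^ t * ∏ i ∈ I, (1 + L i + ε i * e * a) * (1 + L i + ε i * b) := by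
  have hee : e * e = 1 := by rcases he with rfl | rfl <;> norm_num
  have hc : |e * b| ≤ a := by
    rwa [abs_mul, show |e| = 1 by rcases he with rfl | rfl <;> norm_num, one_mul]
  obtain ⟨hca, hac⟩ := abs_le.1 hc
  have hh : ∀ i ∈ I, 0 ≤ (1 + L i - a) * (1 + L i + a) := fun i hi => by
    have := hL i hi; apply mul_nonneg <;> linarith
  have hsame : ∏ i ∈ I.filter (ε · = e), (1 + L i - a) * (1 + L i + a)
      ≤ ∏ i ∈ I.filter (ε · = e), (1 + L i + ε i * e * a) * (1 + L i + ε i * b) := by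
    refine prod_le_prod (fun i hi => hh i (mem_filter.1 hi).1) fun i hi => ?_
    obtain ⟨hiI, hie⟩ := mem_filter.1 hi
    have := hL i hiI
    rw [hie, hee, one_mul]
    nlinarith [mul_nonneg (by linarith : 0 ≤ 1 + L i + a) (by linarith : 0 ≤ a + e * b)]
  have hopp : ∏ i ∈ I.filter (¬ ε · = e), (1 + L i + ε i * e * a) * (1 + L i + ε i * b)
      = ∏ i ∈ I.filter (¬ ε · = e), (1 + L i - a) * (1 + L i - e * b) := by
    refine prod_congr rfl fun i hi => ?_
    obtain ⟨hiI, hie⟩ := mem_filter.1 hi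
    have hneg : ε i = -e := by
      rcases hε i hiI with h | h <;> rcases he with h' | h' <;> simp_all
    rw [hneg, neg_mul, hee]
    ring
  have hcore := mul_prod_le_pow_mul_prod L ht hc fun i hi => hL i (mem_filter.1 hi).1
  have hS0 : 0 ≤ ∏ i ∈ I.filter (¬ ε · = e), (1 + L i - a) :=
    prod_nonneg fun i hi => by linarith [hL i (mem_filter.1 hi).1]
  have hcore_mul : (1 + a - e * b) * ∏ i ∈ I.filter (¬ ε · = e), (1 + L i - a) * (1 + L i + a)
      ≤ (1 + 2 * a) ^ t * ∏ i ∈ I.filter (¬ ε · = e), (1 + L i - a) * (1 + L i - e * b) := by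
    simp only [prod_mul_distrib]
    linarith [mul_le_mul_of_nonneg_left hcore hS0]
  rw [← prod_filter_mul_prod_filter_not I (ε · = e),
    ← prod_filter_mul_prod_filter_not I (ε · = e), hopp]
  have hsame0 : 0 ≤ ∏ i ∈ I.filter (ε · = e), (1 + L i - a) * (1 + L i + a) :=
    prod_nonneg fun i hi => hh i (mem_filter.1 hi).1
  have hopp0 : 0 ≤ (1 + a - e * b) * ∏ i ∈ I.filter (¬ ε · = e), (1 + L i - a) * (1 + L i + a) :=
    mul_nonneg (by linarith) (prod_nonneg fun i hi => hh i (mem_filter.1 hi).1)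
  linarith [mul_le_mul hsame hcore_mul hopp0 (hsame0.trans hsame)]

end SignedProducts

section Dominant

variable {n : ℕ} {lam : Fin n → ℝ} {m l : Fin n}

theorem abs_le_of_lt_of_dominant (hdom : ∀ i j : Fin n, i ≤ j → (j : ℕ) < n - 1 → lam j ≤ lam i)
    (hm : (m : ℕ) + 2 = n) (hl : (l : ℕ) + 1 = n) (hlast : |lam l| ≤ lam m) {i j : Fin n}
    (hij : i < j) : |lam j| ≤ lam i := by
  rw [Fin.lt_def] at hij
  have hlam_m : ∀ k : Fin n, (k : ℕ) ≤ m → lam m ≤ lam k := fun k hk =>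
    hdom k m (Fin.le_def.2 hk) (by omega)
  by_cases hj : (j : ℕ) < n - 1
  · rw [abs_of_nonneg ((abs_nonneg _).trans (hlast.trans (hlam_m j (by omega))))]
    exact hdom i j (Fin.le_def.2 hij.le) hj
  · obtain rfl : j = l := Fin.ext (by omega)
    exact hlast.trans (hlam_m i (by omega))

theorem one_le_one_add_add_sign_mul {x y s : ℝ} (hs : |s| = 1) (h : |y| ≤ x) :
    1 ≤ 1 + x + s * y := by
  have hsy : |s * y| = |y| := by rw [abs_mul, hs, one_mul]
  linarith [neg_abs_le (s * y)]

theorem one_le_pair_factor_of_dominant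
    (hdom : ∀ i j : Fin n, i ≤ j → (j : ℕ) < n - 1 → lam j ≤ lam i)
    (hm : (m : ℕ) + 2 = n) (hl : (l : ℕ) + 1 = n) (hlast : |lam l| ≤ lam m) {ε : Fin n → ℝ}
    (hε : ∀ i, ε i = 1 ∨ ε i = -1) {p : Fin n × Fin n} (hp : p.1 < p.2) :
    1 ≤ 1 + lam p.1 + ε p.1 * ε p.2 * lam p.2 := by
  refine one_le_one_add_add_sign_mul ?_ (abs_le_of_lt_of_dominant hdom hm hl hlast hp)
  rw [abs_mul, (abs_eq zero_le_one).2 (hε _), (abs_eq zero_le_one).2 (hε _), one_mul]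

theorem pow_card_le_prod_pairs_of_dominant
    (hdom : ∀ i j : Fin n, i ≤ j → (j : ℕ) < n - 1 → lam j ≤ lam i)
    (hm : (m : ℕ) + 2 = n) (hl : (l : ℕ) + 1 = n) (hlast : |lam l| ≤ lam m) {ε : Fin n → ℝ}
    (hε : ∀ i, ε i = 1 ∨ ε i = -1) :
    (1 + 2 * lam m) ^ #(univ.filter fun p : Fin n × Fin n =>
        p.1 < p.2 ∧ (p.2 : ℕ) < m ∧ ε p.1 = ε p.2)
      ≤ ∏ p ∈ univ.filter (fun p : Fin n × Fin n => p.1 < p.2 ∧ (p.2 : ℕ) < m),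
        (1 + lam p.1 + ε p.1 * ε p.2 * lam p.2) := by
  have hT := pow_card_filter_le_prod
    (univ.filter fun p : Fin n × Fin n => p.1 < p.2 ∧ (p.2 : ℕ) < m)
    (fun p => ε p.1 = ε p.2) (fun p => 1 + lam p.1 + ε p.1 * ε p.2 * lam p.2)
    (b := 1 + 2 * lam m) (by linarith [(abs_nonneg _).trans hlast])
    (fun p hp hεp => by
      simp only [mem_filter, mem_univ, true_and, Fin.lt_def] at hp
      have hsq : ε p.2 * ε p.2 = 1 := by rcases hε p.2 with h | h <;> rw [h] <;> norm_num
      rw [hεp, hsq]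
      linarith [hdom p.1 m (Fin.le_def.2 (by omega)) (by omega),
        hdom p.2 m (Fin.le_def.2 (by omega)) (by omega)])
    (fun p hp _ => one_le_pair_factor_of_dominant hdom hm hl hlast hε (mem_filter.1 hp).2.1)
  simpa only [filter_filter, and_assoc] using hT

end Dominant

/-- The key inequality for `Dₙ`, `n ≥ 5`: with `λ` dominant, `ε` a sign vector with
`ε_n = +1`, `x_η = λ_{n−1} + η λ_n`, `z_i = 1 + λ_i − λ_{n−1}`,
`N₁ = #{i ≤ n−2 : ε_i ≠ ε_{n−1}}` and `N₂ = #{(i,j) : i < j ≤ n−2, ε_i = ε_j}`, if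
`N₂ ≥ max(N₁, 1)` then
`∏_{i<j≤n}(1 + λ_i + ε_i ε_j λ_j) ≥ (1+x₁)(1+x₋₁) ∏_{i≤n−2} z_i (z_i + x₁ + x₋₁)`.
(Indices are `0`-based: `λ_k` of the paper is `lam ⟨k−1⟩`.) -/
theorem Dn_siegel_product_inequality (n : ℕ) (hn : 5 ≤ n) (lam : Fin n → ℝ)
    (hdom : ∀ i j : Fin n, i ≤ j → (j : ℕ) < n - 1 → lam j ≤ lam i)
    (hlast : |lam (⟨n - 1, by omega⟩ : Fin n)| ≤ lam (⟨n - 2, by omega⟩ : Fin n))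
    (ε : Fin n → ℝ) (hε : ∀ i, ε i = 1 ∨ ε i = -1)
    (hεn : ε (⟨n - 1, by omega⟩ : Fin n) = 1)
    (hN : max ((Finset.univ.filter
          (fun i : Fin n => (i : ℕ) < n - 2 ∧
            ε i ≠ ε (⟨n - 2, by omega⟩ : Fin n))).card) 1
        ≤ (Finset.univ.filter
          (fun p : Fin n × Fin n => p.1 < p.2 ∧ (p.2 : ℕ) < n - 2 ∧
            ε p.1 = ε p.2)).card) :
    (1 + (lam (⟨n - 2, by omega⟩ : Fin n) + lam (⟨n - 1, by omega⟩ : Fin n))) *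
      (1 + (lam (⟨n - 2, by omega⟩ : Fin n) - lam (⟨n - 1, by omega⟩ : Fin n))) *
      ∏ i ∈ Finset.univ.filter (fun i : Fin n => (i : ℕ) < n - 2),
        ((1 + lam i - lam (⟨n - 2, by omega⟩ : Fin n)) *
          ((1 + lam i - lam (⟨n - 2, by omega⟩ : Fin n)) +
            (lam (⟨n - 2, by omega⟩ : Fin n) + lam (⟨n - 1, by omega⟩ : Fin n)) +
            (lam (⟨n - 2, by omega⟩ : Fin n) - lam (⟨n - 1, by omega⟩ : Fin n))))
    ≤ ∏ p ∈ Finset.univ.filter (fun p : Fin n × Fin n => p.1 < p.2),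
        (1 + lam p.1 + ε p.1 * ε p.2 * lam p.2) := by
  set m : Fin n := ⟨n - 2, by omega⟩
  set l : Fin n := ⟨n - 1, by omega⟩
  set I := univ.filter fun i : Fin n => (i : ℕ) < n - 2
  have hm : (m : ℕ) + 2 = n := by simp [m]; omega
  have hl : (l : ℕ) + 1 = n := by simp [l]; omega
  have hF : ∀ i j : Fin n, (i : ℕ) < j → 1 ≤ 1 + lam i + ε i * ε j * lam j := fun i j hij =>
    one_le_pair_factor_of_dominant hdom hm hl hlast hε (p := (i, j)) (Fin.lt_def.2 hij)
  have hsign := mul_prod_le_pow_mul_prod_signed lam I ε (fun i _ => hε i) (hε m) hlast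
    (fun i hi => hdom i m (Fin.le_def.2 (by simp [I] at hi; omega)) (by omega))
    (hN.trans_eq' (by rw [filter_filter]))
  have hP : 0 ≤ ∏ i ∈ I, (1 + lam i + ε i * ε m * lam m) * (1 + lam i + ε i * ε l * lam l) :=
    prod_nonneg fun i hi => by
      simp only [I, mem_filter, mem_univ, true_and] at hi
      exact mul_nonneg (zero_le_one.trans (hF i m (by omega)))
        (zero_le_one.trans (hF i l (by omega)))
  have hFml := hF m l (by omega)
  rw [Fin.prod_pairs_lt_split_last_two _ m l (by omega) hl]
  simp only [hεn, mul_one] at hP hFml ⊢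
  calc _ = (1 + lam m + ε m * lam l) * ((1 + lam m - ε m * lam l)
          * ∏ i ∈ I, (1 + lam i - lam m) * (1 + lam i + lam m)) := by
        rw [prod_congr rfl fun i _ => show (1 + lam i - lam m) * (1 + lam i - lam m
          + (lam m + lam l) + (lam m - lam l)) = (1 + lam i - lam m) * (1 + lam i + lam m) by ring]
        rcases hε m with h | h <;> rw [h] <;> ring
    _ ≤ _ := mul_le_mul_of_nonneg_left hsign (by linarith)
    _ ≤ _ := by
      rw [mul_comm]
      exact mul_le_mul_of_nonneg_right (mul_le_mul_of_nonneg_right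
        (pow_card_le_prod_pairs_of_dominant hdom hm hl hlast hε) hP) (by linarith)
end
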